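/- arXiv:2102.10299 — 12 statements merged into one kernel-verified Lean document; each statement's English description precedes it below -/
import Mathlib

section
/- Let L be an ideal of a commutative ring R with L ⊄ J(R). If I and K are quasi J-ideals of R with IL = KL, then √I = √K. -/
def IsQuasiJIdeal {R : Type*} [CommRing R] (I : Ideal R) : Prop :=
  I ≠ ⊤ ∧ ∀ a b : R, a * b ∈ I → a ∉ Ideal.jacobson (⊥ : Ideal R) → b ∈ I.radical

/-- Multiplying `K` into `I` by an element `a ∈ L \ J(R)` puts `K` inside `√I`. -/
theorem IsQuasiJIdeal.radical_le_of_mul_le {R : Type*} [CommRing R] {I K L : Ideal R}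
    (hI : IsQuasiJIdeal I) (hL : ¬ L ≤ Ideal.jacobson (⊥ : Ideal R)) (h : K * L ≤ I) :
    K.radical ≤ I.radical := by
  obtain ⟨a, haL, haJ⟩ := SetLike.not_le_iff_exists.mp hL
  refine Ideal.radical_le_radical_iff.mpr fun b hb => hI.2 a b ?_ haJ
  exact h (Ideal.mul_mem_mul_rev hb haL)

theorem stmt3 {R : Type*} [CommRing R] (L I K : Ideal R)
    (hL : ¬ L ≤ Ideal.jacobson (⊥ : Ideal R))
    (hI : IsQuasiJIdeal I) (hK : IsQuasiJIdeal K) (h : I * L = K * L) :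
    I.radical = K.radical :=
  le_antisymm (hK.radical_le_of_mul_le hL (h ▸ Ideal.mul_le_left))
    (hI.radical_le_of_mul_le hL (h ▸ Ideal.mul_le_left))
end

section
/- A commutative ring R is local (quasi-local) if and only if every proper ideal of R is a quasi J-ideal. -/
section

open Ideal

variable {R : Type*} [CommRing R]

theorem IsLocalRing.isUnit_of_notMem_jacobson_bot [IsLocalRing R] {a : R}
    (ha : a ∉ jacobson (⊥ : Ideal R)) : IsUnit a := by
  rw [IsLocalRing.jacobson_eq_maximalIdeal ⊥ bot_ne_top] at ha
  exact not_not.mp ha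

theorem IsLocalRing.isQuasiJIdeal [IsLocalRing R] {I : Ideal R} (hI : I ≠ ⊤) :
    IsQuasiJIdeal I := by
  refine ⟨hI, fun a b hab ha => le_radical ?_⟩
  obtain ⟨u, rfl⟩ := IsLocalRing.isUnit_of_notMem_jacobson_bot ha
  simpa using I.mul_mem_left (↑u⁻¹ : R) hab

theorem IsQuasiJIdeal.mem_jacobson_bot_of_span_singleton {a : R}
    (h : IsQuasiJIdeal (span {a})) : a ∈ jacobson (⊥ : Ideal R) := by
  by_contra ha
  have hone : (1 : R) ∈ (span {a}).radical :=
    h.2 a 1 (by simp only [mul_one]; exact mem_span_singleton_self a) ha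
  exact h.1 (radical_eq_top.mp ((eq_top_iff_one _).mpr hone))

end

theorem stmt5 {R : Type*} [CommRing R] [Nontrivial R] :
    IsLocalRing R ↔ ∀ I : Ideal R, I ≠ ⊤ → IsQuasiJIdeal I := by
  refine ⟨fun _ I hI => IsLocalRing.isQuasiJIdeal hI, fun h => ?_⟩
  refine IsLocalRing.of_isUnit_or_isUnit_one_sub_self fun a =>
    or_iff_not_imp_left.mpr fun ha => ?_
  have haJ : a ∈ Ideal.jacobson (⊥ : Ideal R) :=
    (h _ (Ideal.span_singleton_eq_top.not.mpr ha)).mem_jacobson_bot_of_span_singleton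
  simpa [sub_eq_neg_add] using Ideal.mem_jacobson_bot.mp haJ (-1)
end

section
/- A commutative ring R is local (quasi-local) if and only if every maximal ideal of R is a quasi J-ideal. -/
theorem IsQuasiJIdeal.le_jacobson_bot {R : Type*} [CommRing R] {I : Ideal R}
    (hI : IsQuasiJIdeal I) : I ≤ Ideal.jacobson ⊥ := by
  intro a ha
  by_contra haJ
  have hone : (1 : R) ∈ I.radical := hI.2 a 1 (by rwa [mul_one]) haJ
  exact hI.1 (Ideal.radical_eq_top.mp ((Ideal.eq_top_iff_one _).mpr hone))

theorem IsLocalRing.isQuasiJIdeal_of_ne_top {R : Type*} [CommRing R] [IsLocalRing R]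
    {I : Ideal R} (hI : I ≠ ⊤) : IsQuasiJIdeal I := by
  refine ⟨hI, fun a b hab ha ↦ Ideal.le_radical ?_⟩
  rw [IsLocalRing.jacobson_eq_maximalIdeal ⊥ bot_ne_top, IsLocalRing.notMem_maximalIdeal] at ha
  exact (I.unit_mul_mem_iff_mem ha).mp hab

theorem IsLocalRing.of_forall_isMaximal_le_jacobson_bot {R : Type*} [CommRing R] [Nontrivial R]
    (h : ∀ M : Ideal R, M.IsMaximal → M ≤ Ideal.jacobson ⊥) : IsLocalRing R := by
  obtain ⟨M, hM⟩ := Ideal.exists_maximal R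
  exact IsLocalRing.of_unique_max_ideal
    ⟨M, hM, fun N hN ↦ hN.eq_of_le hM.ne_top ((h N hN).trans (sInf_le ⟨bot_le, hM⟩))⟩

theorem stmt6 {R : Type*} [CommRing R] [Nontrivial R] :
    IsLocalRing R ↔ ∀ M : Ideal R, M.IsMaximal → IsQuasiJIdeal M := by
  constructor
  · intro _ M hM
    exact IsLocalRing.isQuasiJIdeal_of_ne_top hM.ne_top
  · intro h
    exact IsLocalRing.of_forall_isMaximal_le_jacobson_bot fun M hM ↦ (h M hM).le_jacobson_bot
end

section
/- If R is a commutative ring with J(R) = 0 that is not an integral domain, then R has no quasi J-ideals. -/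
namespace IsQuasiJIdeal

variable {R : Type*} [CommRing R] {I : Ideal R}

theorem le_jacobson_bot_s8 (hI : IsQuasiJIdeal I) : I ≤ Ideal.jacobson ⊥ := by
  intro a ha
  by_contra haJ
  obtain ⟨n, hn⟩ := hI.2 a 1 (by simpa using ha) haJ
  rw [one_pow] at hn
  exact hI.1 ((Ideal.eq_top_iff_one I).mpr hn)

theorem isDomain_of_bot (hJ : Ideal.jacobson (⊥ : Ideal R) = ⊥)
    (hbot : IsQuasiJIdeal (⊥ : Ideal R)) : IsDomain R := by
  have : Nontrivial R :=
    (subsingleton_or_nontrivial R).resolve_left fun _ => hbot.1 (Subsingleton.elim _ _)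
  have : NoZeroDivisors R := by
    refine ⟨fun {a b} hab => or_iff_not_imp_left.mpr fun ha => ?_⟩
    have hb : b ∈ (⊥ : Ideal R).radical := hbot.2 a b hab (by rwa [hJ])
    exact hJ.le (Ideal.radical_le_jacobson hb)
  exact NoZeroDivisors.to_isDomain R

end IsQuasiJIdeal

theorem stmt8 {R : Type*} [CommRing R]
    (hJ : Ideal.jacobson (⊥ : Ideal R) = ⊥) (hnd : ¬ IsDomain R) :
    ∀ I : Ideal R, ¬ IsQuasiJIdeal I := by
  intro I hI
  obtain rfl : I = ⊥ := eq_bot_iff.mpr (hJ ▸ hI.le_jacobson_bot_s8)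
  exact hnd (hI.isDomain_of_bot hJ)
end

section
/- Let R be a semiprimitive commutative ring (J(R)=0). Then R is an integral domain if and only if the only quasi J-ideal of R is the zero ideal. -/
theorem isQuasiJIdeal_bot_iff_isDomain {R : Type*} [CommRing R]
    (hJ : Ideal.jacobson (⊥ : Ideal R) = ⊥) : IsQuasiJIdeal (⊥ : Ideal R) ↔ IsDomain R := by
  have hrad : (⊥ : Ideal R).radical = ⊥ := le_bot_iff.mp (Ideal.radical_le_jacobson.trans hJ.le)
  simp only [IsQuasiJIdeal, hJ, hrad, Ideal.mem_bot, isDomain_iff_noZeroDivisors_and_nontrivial,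
    noZeroDivisors_iff_right_eq_zero_of_mul]
  constructor
  · rintro ⟨hbot, hdiv⟩
    exact ⟨fun a ha b hab => hdiv a b hab ha,
      nontrivial_of_ne 1 0 (by simpa [Ideal.ne_top_iff_one] using hbot)⟩
  · rintro ⟨hdiv, _⟩
    exact ⟨bot_ne_top, fun a b hab ha => hdiv a ha b hab⟩

theorem stmt9_general {R : Type*} [CommRing R]
    (hJ : Ideal.jacobson (⊥ : Ideal R) = ⊥) :
    IsDomain R ↔ (∀ I : Ideal R, IsQuasiJIdeal I ↔ I = ⊥) := by
  constructor
  · intro hD I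
    refine ⟨fun hI => le_bot_iff.mp (hI.le_jacobson_bot.trans hJ.le), ?_⟩
    rintro rfl
    exact (isQuasiJIdeal_bot_iff_isDomain hJ).mpr hD
  · intro h
    exact (isQuasiJIdeal_bot_iff_isDomain hJ).mp ((h ⊥).mpr rfl)

theorem stmt9 {R : Type*} [CommRing R] [Nontrivial R]
    (hJ : Ideal.jacobson (⊥ : Ideal R) = ⊥) :
    IsDomain R ↔ (∀ I : Ideal R, IsQuasiJIdeal I ↔ I = ⊥) :=
  stmt9_general hJ
end

section
/- If I is a quasi J-ideal of a commutative ring R and S is a subset of R with S ⊄ J(R), then √(I : S) = (√I : S). -/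
def setColon {R : Type*} [CommRing R] (I : Ideal R) (S : Set R) : Ideal R where
  carrier := {r : R | ∀ s ∈ S, r * s ∈ I}
  zero_mem' := by intro s hs; simp
  add_mem' := by
    intro a b ha hb s hs
    have := I.add_mem (ha s hs) (hb s hs)
    simpa [add_mul] using this
  smul_mem' := by
    intro c a ha s hs
    have := I.mul_mem_left c (ha s hs)
    simpa [mul_assoc] using this

section

variable {R : Type*} [CommRing R]

theorem le_setColon (I : Ideal R) (S : Set R) : I ≤ setColon I S :=
  fun _ hr s _ => I.mul_mem_right s hr

theorem radical_setColon_le (I : Ideal R) (S : Set R) :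
    (setColon I S).radical ≤ setColon I.radical S := by
  rintro r ⟨n, hn⟩ s hs
  refine ⟨n + 1, ?_⟩
  rw [show (r * s) ^ (n + 1) = (r ^ n * s) * (r * s ^ n) by ring]
  exact I.mul_mem_right _ (hn s hs)

theorem IsQuasiJIdeal.mem_radical_of_mul_mem_radical {I : Ideal R} (hI : IsQuasiJIdeal I)
    {a b : R} (hab : a * b ∈ I.radical) (ha : a ∉ Ideal.jacobson (⊥ : Ideal R)) :
    b ∈ I.radical := by
  obtain ⟨n, hn⟩ := hab
  have han : a ^ n ∉ Ideal.jacobson (⊥ : Ideal R) :=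
    fun h => ha ((⊥ : Ideal R).isRadical_jacobson ⟨n, h⟩)
  rw [mul_pow] at hn
  exact I.radical_isRadical ⟨n, hI.2 _ _ hn han⟩

theorem IsQuasiJIdeal.setColon_radical_le {I : Ideal R} (hI : IsQuasiJIdeal I) {S : Set R}
    (hS : ¬ S ⊆ (Ideal.jacobson (⊥ : Ideal R) : Set R)) :
    setColon I.radical S ≤ I.radical := by
  obtain ⟨s, hsS, hsJ⟩ := Set.not_subset.mp hS
  exact fun r hr => hI.mem_radical_of_mul_mem_radical (mul_comm r s ▸ hr s hsS) hsJ

end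

theorem stmt10 {R : Type*} [CommRing R] (I : Ideal R) (S : Set R)
    (hS : ¬ S ⊆ (Ideal.jacobson (⊥ : Ideal R) : Set R))
    (hI : IsQuasiJIdeal I) :
    (setColon I S).radical = setColon I.radical S :=
  le_antisymm (radical_setColon_le I S)
    ((hI.setColon_radical_le hS).trans (Ideal.radical_mono (le_setColon I S)))
end

section
/- If I is a quasi J-ideal of a commutative ring R that is maximal among quasi J-ideals (with respect to inclusion), then I is a J-ideal of R. -/
def IsJIdeal {R : Type*} [CommRing R] (I : Ideal R) : Prop :=
  I ≠ ⊤ ∧ ∀ a b : R, a * b ∈ I → a ∉ Ideal.jacobson (⊥ : Ideal R) → b ∈ I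

/-! The radical of a quasi J-ideal is again a quasi J-ideal, since the Jacobson radical is a
radical ideal. A maximal quasi J-ideal therefore equals its radical, and a radical quasi J-ideal
is by definition a J-ideal. -/

namespace IsQuasiJIdeal

variable {R : Type*} [CommRing R] {I : Ideal R}

theorem radical (hI : IsQuasiJIdeal I) : IsQuasiJIdeal I.radical := by
  obtain ⟨hne, hq⟩ := hI
  refine ⟨Ideal.radical_eq_top.not.mpr hne, fun a b ⟨n, hab⟩ ha => ?_⟩
  have han : a ^ n ∉ Ideal.jacobson (⊥ : Ideal R) :=
    fun h => ha (Ideal.isRadical_jacobson ⊥ ⟨n, h⟩)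
  rw [mul_pow] at hab
  exact ⟨n, hq _ _ hab han⟩

theorem isJIdeal_of_radical_eq (hI : IsQuasiJIdeal I) (hrad : I.radical = I) : IsJIdeal I :=
  ⟨hI.1, fun a b hab ha => hrad ▸ hI.2 a b hab ha⟩

end IsQuasiJIdeal

theorem stmt12 {R : Type*} [CommRing R] (I : Ideal R) (hI : IsQuasiJIdeal I)
    (hmax : ∀ K : Ideal R, IsQuasiJIdeal K → I ≤ K → K = I) :
    IsJIdeal I :=
  hI.isJIdeal_of_radical_eq (hmax _ hI.radical Ideal.le_radical)
end

section
/- For a commutative ring R, the following are equivalent: (1) J(R) is a J-ideal; (2) J(R) is a quasi J-ideal; (3) J(R) is a prime ideal. -/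
/-! Since `J(R)` is a radical ideal, the J-ideal and quasi J-ideal conditions on it coincide; and
for `I = J(R)` the J-ideal condition "`ab ∈ J(R)`, `a ∉ J(R)` ⟹ `b ∈ J(R)`" is primality. -/

section

variable {R : Type*} [CommRing R]

theorem isJIdeal_iff_isQuasiJIdeal_of_isRadical {I : Ideal R} (hI : I.IsRadical) :
    IsJIdeal I ↔ IsQuasiJIdeal I := by
  rw [IsJIdeal, IsQuasiJIdeal, hI.radical]

theorem isJIdeal_jacobson_bot_iff_isPrime :
    IsJIdeal (Ideal.jacobson (⊥ : Ideal R)) ↔ (Ideal.jacobson (⊥ : Ideal R)).IsPrime := by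
  refine ⟨fun ⟨hne, hJ⟩ => ⟨hne, fun {a b} hab => ?_⟩, fun hp => ⟨hp.ne_top, fun a b hab ha => ?_⟩⟩
  · by_cases ha : a ∈ Ideal.jacobson (⊥ : Ideal R)
    · exact Or.inl ha
    · exact Or.inr (hJ a b hab ha)
  · exact (hp.mem_or_mem hab).resolve_left ha

end

theorem stmt13_general {R : Type*} [CommRing R] :
    (IsJIdeal (Ideal.jacobson (⊥ : Ideal R)) ↔
      IsQuasiJIdeal (Ideal.jacobson (⊥ : Ideal R))) ∧
    (IsQuasiJIdeal (Ideal.jacobson (⊥ : Ideal R)) ↔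
      (Ideal.jacobson (⊥ : Ideal R)).IsPrime) := by
  have hJQ := isJIdeal_iff_isQuasiJIdeal_of_isRadical (Ideal.isRadical_jacobson (⊥ : Ideal R))
  exact ⟨hJQ, hJQ.symm.trans isJIdeal_jacobson_bot_iff_isPrime⟩

theorem stmt13 {R : Type*} [CommRing R]
    (h : Ideal.jacobson (⊥ : Ideal R) ≠ ⊤) :
    (IsJIdeal (Ideal.jacobson (⊥ : Ideal R)) ↔
      IsQuasiJIdeal (Ideal.jacobson (⊥ : Ideal R))) ∧
    (IsQuasiJIdeal (Ideal.jacobson (⊥ : Ideal R)) ↔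
      (Ideal.jacobson (⊥ : Ideal R)).IsPrime) :=
  stmt13_general
end

section
/- If I is a quasi J-ideal of a commutative ring R, then I is superfluous, i.e., whenever K is an ideal with I + K = R, then K = R. -/
theorem Ideal.eq_top_of_sup_eq_top_of_le_jacobson_bot {R : Type*} [CommRing R] {I K : Ideal R}
    (hI : I ≤ Ideal.jacobson ⊥) (hIK : I ⊔ K = ⊤) : K = ⊤ := by
  refine top_le_iff.mp (Submodule.le_of_le_smul_of_le_jacobson_bot Module.Finite.fg_top hI ?_)
  rw [Ideal.smul_eq_mul, Ideal.mul_top, sup_comm, hIK]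

theorem stmt14 {R : Type*} [CommRing R] (I : Ideal R) (hI : IsQuasiJIdeal I) :
    ∀ K : Ideal R, I ⊔ K = ⊤ → K = ⊤ :=
  fun _ => Ideal.eq_top_of_sup_eq_top_of_le_jacobson_bot hI.le_jacobson_bot
end

section
/- If I₁, ..., I_k are quasi J-ideals of a commutative ring R, then their intersection ⋂ᵢ Iᵢ is a quasi J-ideal of R. -/
theorem Ideal.radical_iInf_of_finite {R ι : Type*} [CommSemiring R] [Finite ι]
    (I : ι → Ideal R) : (⨅ i, I i).radical = ⨅ i, (I i).radical := by
  cases nonempty_fintype ι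
  simpa only [Finset.inf_univ_eq_iInf, Ideal.radicalInfTopHom_apply, Function.comp_def] using
    map_finset_inf Ideal.radicalInfTopHom Finset.univ I

theorem IsQuasiJIdeal.iInf {R ι : Type*} [CommRing R] [Finite ι] [Nonempty ι]
    {I : ι → Ideal R} (hI : ∀ i, IsQuasiJIdeal (I i)) : IsQuasiJIdeal (⨅ i, I i) := by
  obtain ⟨i₀⟩ := ‹Nonempty ι›
  refine ⟨fun h => (hI i₀).1 (iInf_eq_top.mp h i₀), fun a b hab ha => ?_⟩
  rw [Ideal.radical_iInf_of_finite, Ideal.mem_iInf]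
  exact fun i => (hI i).2 a b (Ideal.mem_iInf.mp hab i) ha

theorem stmt15 {R : Type*} [CommRing R] (k : ℕ) (hk : 0 < k)
    (I : Fin k → Ideal R) (hI : ∀ i, IsQuasiJIdeal (I i)) :
    IsQuasiJIdeal (⨅ i, I i) :=
  have : Nonempty (Fin k) := ⟨⟨0, hk⟩⟩
  IsQuasiJIdeal.iInf hI
end

section
/- If I₁, ..., I_k are quasi J-ideals of a commutative ring R, then the product I₁ I₂ ⋯ I_k is a quasi J-ideal of R. -/
namespace IsQuasiJIdeal

variable {R : Type*} [CommRing R]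

theorem mul {I J : Ideal R} (hI : IsQuasiJIdeal I) (hJ : IsQuasiJIdeal J) :
    IsQuasiJIdeal (I * J) := by
  refine ⟨fun h => hI.1 (top_le_iff.mp (h ▸ Ideal.mul_le_left)), fun a b hab ha => ?_⟩
  rw [Ideal.radical_mul]
  exact ⟨hI.2 a b (Ideal.mul_le_left hab) ha, hJ.2 a b (Ideal.mul_le_right hab) ha⟩

theorem finset_prod {ι : Type*} {s : Finset ι} (hs : s.Nonempty) {I : ι → Ideal R}
    (hI : ∀ i ∈ s, IsQuasiJIdeal (I i)) : IsQuasiJIdeal (∏ i ∈ s, I i) := by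
  induction hs using Finset.Nonempty.cons_induction with
  | singleton i => simpa using hI i (Finset.mem_singleton_self i)
  | cons i s _ _ ih =>
    rw [Finset.prod_cons]
    exact (hI i (Finset.mem_cons_self i s)).mul
      (ih fun j hj => hI j (Finset.mem_cons_of_mem hj))

end IsQuasiJIdeal

theorem stmt16 {R : Type*} [CommRing R] (k : ℕ) (hk : 0 < k)
    (I : Fin k → Ideal R) (hI : ∀ i, IsQuasiJIdeal (I i)) :
    IsQuasiJIdeal (∏ i, I i) :=
  IsQuasiJIdeal.finset_prod (Finset.univ_nonempty_iff.mpr ⟨⟨0, hk⟩⟩) fun i _ => hI i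
end

section
/- If R = R₁ × R₂ is a product of two nonzero commutative rings, then R has no quasi J-ideals. -/
namespace IsIdempotentElem

variable {R : Type*} [CommRing R] {e : R}

theorem eq_zero_of_mem_jacobson_bot (he : IsIdempotentElem e)
    (hJ : e ∈ Ideal.jacobson (⊥ : Ideal R)) : e = 0 := by
  have hunit : IsUnit (1 - e) := by
    simpa [sub_eq_neg_add, add_comm] using Ideal.mem_jacobson_bot.mp hJ (-1)
  exact hunit.mul_right_eq_zero.mp he.one_sub_mul_self

theorem mem_of_mem_radical (he : IsIdempotentElem e) {I : Ideal R} (hrad : e ∈ I.radical) :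
    e ∈ I := by
  obtain ⟨n, hn⟩ := hrad
  simpa only [← pow_succ', he.pow_succ_eq] using I.mul_mem_left e hn

end IsIdempotentElem

theorem not_isQuasiJIdeal_of_isIdempotentElem {R : Type*} [CommRing R] {e : R}
    (he : IsIdempotentElem e) (he₀ : e ≠ 0) (he₁ : e ≠ 1) (I : Ideal R) : ¬ IsQuasiJIdeal I := by
  rintro ⟨hI, hquasi⟩
  have hf : IsIdempotentElem (1 - e) := he.one_sub
  have hf₀ : 1 - e ≠ 0 := sub_ne_zero.mpr he₁.symm
  have hfI : 1 - e ∈ I := hf.mem_of_mem_radical <|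
    hquasi e (1 - e) (he.mul_one_sub_self ▸ I.zero_mem) (mt he.eq_zero_of_mem_jacobson_bot he₀)
  have heI : e ∈ I := he.mem_of_mem_radical <|
    hquasi (1 - e) e (he.one_sub_mul_self ▸ I.zero_mem) (mt hf.eq_zero_of_mem_jacobson_bot hf₀)
  exact hI <| (Ideal.eq_top_iff_one I).mpr (add_sub_cancel e 1 ▸ I.add_mem heI hfI)

theorem stmt17 {R₁ R₂ : Type*} [CommRing R₁] [CommRing R₂]
    [Nontrivial R₁] [Nontrivial R₂] :
    ∀ I : Ideal (R₁ × R₂), ¬ IsQuasiJIdeal I :=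
  not_isQuasiJIdeal_of_isIdempotentElem (e := ((1 : R₁), (0 : R₂)))
    (Prod.ext (mul_one 1) (mul_zero 0)) (by simp [Prod.ext_iff]) (by simp [Prod.ext_iff])
end
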